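/- The polynomial l1(z,w) = z + (3b/16) z² + (b/8) z w + (b/48) w² is a Darboux factor of the system P(z,w) = z + (1/16)(21b z² - 6b z w + b w²), Q(z,w) = -w + (1/16)(-27b z² + 18b z w - 7b w²); that is, there exists a polynomial cofactor K(z,w) with ∂l1/∂z · P + ∂l1/∂w · Q = K · l1 identically over ℂ. -/

import Mathlib

open Complex MvPolynomial

theorem deriv_quadratic {𝕜 : Type*} [NontriviallyNormedField 𝕜] (a c d x : 𝕜) :
    deriv (fun y => a + c * y + d * y ^ 2) x = c + 2 * d * x := by
  have h : HasDerivAt (fun y => a + c * y + d * y ^ 2) (c * 1 + d * (2 * x ^ 1)) x :=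
    (((hasDerivAt_id' x).const_mul c).const_add a).add ((hasDerivAt_pow 2 x).const_mul d)
  rw [h.deriv]
  ring

noncomputable def darbouxCofactor (b : ℂ) : MvPolynomial (Fin 2) ℂ :=
  C 1 + C (3 * b / 2) * X 0 - C (b / 2) * X 1

theorem eval_darbouxCofactor (b z w : ℂ) :
    eval (fun i : Fin 2 => if i = 0 then z else w) (darbouxCofactor b) =
      1 + 3 * b / 2 * z - b / 2 * w := by
  simp [darbouxCofactor]

/-- `l1 = z + (3b/16)z² + (b/8)zw + (b/48)w²` is a Darboux factor of the system (P,Q). -/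
theorem stmt5 (b : ℂ) :
    ∃ K : MvPolynomial (Fin 2) ℂ, ∀ z w : ℂ,
      deriv (fun z' : ℂ => z' + (3*b/16)*z'^2 + (b/8)*z'*w + (b/48)*w^2) z *
        (z + (1/16)*(21*b*z^2 - 6*b*z*w + b*w^2)) +
      deriv (fun w' : ℂ => z + (3*b/16)*z^2 + (b/8)*z*w' + (b/48)*w'^2) w *
        (-w + (1/16)*(-27*b*z^2 + 18*b*z*w - 7*b*w^2)) =
      (MvPolynomial.eval (fun i : Fin 2 => if i = 0 then z else w) K) *
        (z + (3*b/16)*z^2 + (b/8)*z*w + (b/48)*w^2) := by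
  refine ⟨darbouxCofactor b, fun z w => ?_⟩
  have hz : deriv (fun z' : ℂ => z' + (3*b/16)*z'^2 + (b/8)*z'*w + (b/48)*w^2) z =
      (1 + b/8*w) + 2 * (3*b/16) * z := by
    rw [← deriv_quadratic ((b/48)*w^2)]
    congr 1
    funext y
    ring
  have hw : deriv (fun w' : ℂ => z + (3*b/16)*z^2 + (b/8)*z*w' + (b/48)*w'^2) w =
      b/8*z + 2 * (b/48) * w :=
    deriv_quadratic _ _ _ w
  rw [hz, hw, eval_darbouxCofactor]
  ring
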